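/- Let x₁, …, x_N ∈ C²([0,T]; ℝ) with x₁(t) < x₂(t) < ⋯ < x_N(t) for all t (real-line setting), Rᵢ(t) = δ/(xᵢ(t) − x_{i−1}(t)) for i = 2, …, N, and B(r) = G'(r) r². Assume L ∈ C²(ℝ) with L'' > 0, G ∈ C¹((0,∞)) with G' nonnegative and nondecreasing on (0, ∞), and that the trajectories solve the Euler–Lagrange system with zero potential gradient on the real line: L''(ẋᵢ) ẍᵢ = N (B(R_{i+1}) − B(Rᵢ)) for 2 ≤ i ≤ N−1, L''(ẋ₁) ẍ₁ = N B(R₂), and L''(ẋ_N) ẍ_N = − N B(R_N). If U : [0, ∞) → ℝ is twice continuously differentiable, convex, and satisfies U(0) = 0, then the map t ↦ Σ_{i=2}^{N} U(Rᵢ(t)) (xᵢ(t) − x_{i−1}(t)) is convex on [0, T]. -/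

import Mathlib

/-!
Write `F(t) = Σᵢ U(Rᵢ) dᵢ` with gaps `dᵢ = xᵢ - xᵢ₋₁`, so that `Rᵢ = δ / dᵢ`. With the pressure
`P(r) = r U'(r) - U(r)` one finds `F' = -Σᵢ P(Rᵢ) ḋᵢ` and
`F'' = Σᵢ Rᵢ² U''(Rᵢ) ḋᵢ² / dᵢ - Σᵢ P(Rᵢ) d̈ᵢ`.
The first sum is nonnegative by convexity of `U`. Summing the second by parts leaves the boundary
terms `P(R_N) ẍ_N` and `-P(R₂) ẍ₁` and the terms `-(P(Rᵢ₊₁) - P(Rᵢ)) ẍᵢ`. Since `L'' > 0`, the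
Euler–Lagrange equations give `ẍᵢ` the sign of `B(Rᵢ₊₁) - B(Rᵢ)` (with `B(R₁) = B(R_{N+1}) = 0`);
as `P ≥ 0` (because `U(0) = 0`) and `P`, `B` are both nondecreasing, every such term is `≤ 0`.
-/

open Set Finset

/-- Discrete density `Rᵢ(t) = δ/(xᵢ(t) − x_{i−1}(t))`, `δ = 1/N`, real-line indexing by `ℕ`. -/
noncomputable def Rd (N : ℕ) (x : ℕ → ℝ → ℝ) (i : ℕ) (t : ℝ) : ℝ :=
  ((1 : ℝ) / N) / (x i t - x (i - 1) t)

open Filter Topology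

noncomputable def pressure (U : ℝ → ℝ) (r : ℝ) : ℝ :=
  r * deriv U r - U r

theorem sum_Icc_mul_sub_by_parts {R : Type*} [CommRing R] (f g : ℕ → R) {m n : ℕ} (hmn : m ≤ n) :
    ∑ i ∈ Icc m n, f i * (g i - g (i - 1)) =
      f n * g n - f m * g (m - 1) - ∑ i ∈ Ico m n, (f (i + 1) - f i) * g i := by
  induction n, hmn using Nat.le_induction with
  | base =>
    simp only [Finset.Icc_self, sum_singleton, Finset.Ico_self, sum_empty, sub_zero]
    ring
  | succ n hmn ih =>
    rw [sum_Icc_succ_top (by omega), ih, sum_Ico_succ_top hmn, Nat.add_sub_cancel]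
    ring

theorem MonotoneOn.sub_mul_sub_nonneg {α β : Type*} [LinearOrder α] [Ring β] [LinearOrder β]
    [IsStrictOrderedRing β] {s : Set α} {f g : α → β} (hf : MonotoneOn f s)
    (hg : MonotoneOn g s) {a b : α} (ha : a ∈ s) (hb : b ∈ s) :
    0 ≤ (f b - f a) * (g b - g a) := by
  rcases le_total a b with hab | hab
  · exact mul_nonneg (sub_nonneg.2 (hf ha hb hab)) (sub_nonneg.2 (hg ha hb hab))
  · exact mul_nonneg_of_nonpos_of_nonpos (sub_nonpos.2 (hf hb ha hab))
      (sub_nonpos.2 (hg hb ha hab))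

theorem ConvexOn.nonneg_of_hasDerivAt_deriv {S : Set ℝ} {U : ℝ → ℝ} {r u₂ : ℝ}
    (hU : ConvexOn ℝ S U) (hS : S ∈ 𝓝 r) (hd : ∀ y ∈ S, DifferentiableAt ℝ U y)
    (h₂ : HasDerivAt (deriv U) u₂ r) : 0 ≤ u₂ := by
  have hacc : AccPt r (𝓟 (S ∩ univ)) :=
    (PerfectSpace.univ_preperfect r (mem_univ r)).nhds_inter hS
  rw [inter_univ] at hacc
  exact h₂.hasDerivWithinAt.nonneg_of_monotoneOn hacc (hU.monotoneOn_deriv hd)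

section pressure

variable {U : ℝ → ℝ}

theorem pressure_nonneg (hU : ConvexOn ℝ (Ici 0) U) (hU0 : U 0 = 0) {r : ℝ} (hr : 0 < r)
    (hd : DifferentiableAt ℝ U r) : 0 ≤ pressure U r := by
  have h := hU.slope_le_deriv self_mem_Ici hr.le hr hd
  rw [slope_def_field, hU0, sub_zero, sub_zero, div_le_iff₀ hr] at h
  unfold pressure
  linarith

theorem pressure_monotoneOn (hU : ConvexOn ℝ (Ici 0) U)
    (hd : ∀ r ∈ Ioi (0 : ℝ), DifferentiableAt ℝ U r) : MonotoneOn (pressure U) (Ioi 0) := by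
  intro a ha b hb hab
  rcases hab.eq_or_lt with rfl | hab
  · rfl
  have hsec := hU.slope_le_deriv (mem_Ici.2 (le_of_lt ha)) (mem_Ici.2 (le_of_lt hb)) hab (hd b hb)
  rw [slope_def_field, div_le_iff₀ (sub_pos.2 hab)] at hsec
  have hmono := (hU.subset Ioi_subset_Ici_self (convex_Ioi 0)).monotoneOn_deriv hd ha hb hab.le
  unfold pressure
  linarith [mul_le_mul_of_nonneg_left hmono (le_of_lt ha)]

theorem hasDerivAt_pressure {r u₂ : ℝ} (hd : DifferentiableAt ℝ U r)
    (h₂ : HasDerivAt (deriv U) u₂ r) : HasDerivAt (pressure U) (r * u₂) r := by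
  refine (((hasDerivAt_id r).mul h₂).sub hd.hasDerivAt).congr_deriv ?_
  simp only [id]
  ring

end pressure

section

variable {U d d₁ : ℝ → ℝ} {δ d' d₂ u₂ t : ℝ}

theorem HasDerivAt.const_div (hd : HasDerivAt d d' t) (hd0 : d t ≠ 0) :
    HasDerivAt (fun s => δ / d s) (-(δ / d t) * d' / d t) t := by
  refine ((hasDerivAt_const t δ).div hd hd0).congr_deriv ?_
  field_simp
  ring

theorem hasDerivAt_mul_comp_div (hU : DifferentiableAt ℝ U (δ / d t)) (hd : HasDerivAt d d' t)
    (hd0 : d t ≠ 0) :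
    HasDerivAt (fun s => U (δ / d s) * d s) (-(pressure U (δ / d t) * d')) t := by
  refine ((hU.hasDerivAt.comp t (hd.const_div hd0)).mul hd).congr_deriv ?_
  simp only [Function.comp_apply, pressure]
  field_simp
  ring

theorem hasDerivAt_neg_pressure_comp_div_mul (hU : DifferentiableAt ℝ U (δ / d t))
    (hU' : HasDerivAt (deriv U) u₂ (δ / d t)) (hd : HasDerivAt d (d₁ t) t)
    (hd₁ : HasDerivAt d₁ d₂ t) (hd0 : d t ≠ 0) :
    HasDerivAt (fun s => -(pressure U (δ / d s) * d₁ s))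
      ((δ / d t) ^ 2 * u₂ * d₁ t ^ 2 / d t - pressure U (δ / d t) * d₂) t := by
  refine (((hasDerivAt_pressure hU hU').comp t (hd.const_div hd0)).mul hd₁).neg
    |>.congr_deriv ?_
  simp only [Function.comp_apply]
  field_simp
  ring

end

theorem convexOn_of_hasDerivAt2_nonneg {D : Set ℝ} (hD : Convex ℝ D) {f f' f'' : ℝ → ℝ}
    (hf : ∀ t ∈ D, HasDerivAt f (f' t) t) (hf' : ∀ t ∈ D, HasDerivAt f' (f'' t) t)
    (hf'' : ∀ t ∈ D, 0 ≤ f'' t) : ConvexOn ℝ D f :=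
  convexOn_of_hasDerivWithinAt2_nonneg hD (fun t ht => (hf t ht).continuousAt.continuousWithinAt)
    (fun t ht => (hf t (interior_subset ht)).hasDerivWithinAt)
    (fun t ht => (hf' t (interior_subset ht)).hasDerivWithinAt)
    fun t ht => hf'' t (interior_subset ht)

theorem ContDiffAt.hasDerivAt_deriv {𝕜 F : Type*} [NontriviallyNormedField 𝕜]
    [NormedAddCommGroup F] [NormedSpace 𝕜 F] {f : 𝕜 → F} {r : 𝕜} (hf : ContDiffAt 𝕜 2 f r) :
    HasDerivAt (deriv f) (deriv (deriv f) r) r :=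
  ((hf.derivWithin (m := 1) (by norm_num)).differentiableAt one_ne_zero).hasDerivAt

theorem sum_mul_sub_nonpos_of_eulerLagrange {N : ℕ} (hN : 2 ≤ N) {p B : ℝ → ℝ} {R a c : ℕ → ℝ}
    {κ : ℝ} (hκ : 0 ≤ κ) (hp₀ : ∀ r ∈ Ioi (0 : ℝ), 0 ≤ p r) (hp : MonotoneOn p (Ioi 0))
    (hB₀ : ∀ r ∈ Ioi (0 : ℝ), 0 ≤ B r) (hB : MonotoneOn B (Ioi 0))
    (hR : ∀ i ∈ Finset.Icc 2 N, 0 < R i) (hc : ∀ i, 0 < c i)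
    (h_mid : ∀ i, 2 ≤ i → i ≤ N - 1 → c i * a i = κ * (B (R (i + 1)) - B (R i)))
    (h_first : c 1 * a 1 = κ * B (R 2)) (h_last : c N * a N = -(κ * B (R N))) :
    ∑ i ∈ Finset.Icc 2 N, p (R i) * (a i - a (i - 1)) ≤ 0 := by
  have hR₂ : 0 < R 2 := hR 2 (Finset.mem_Icc.2 ⟨le_rfl, hN⟩)
  have hR_N : 0 < R N := hR N (Finset.mem_Icc.2 ⟨hN, le_rfl⟩)
  have ha₁ : 0 ≤ a 1 :=
    nonneg_of_mul_nonneg_right (h_first ▸ mul_nonneg hκ (hB₀ _ hR₂)) (hc 1)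
  have ha_N : a N ≤ 0 :=
    nonpos_of_mul_nonpos_right (h_last ▸ neg_nonpos.2 (mul_nonneg hκ (hB₀ _ hR_N))) (hc N)
  -- `p` and `B` are both nondecreasing in the density, and `a i` has the sign of `B(Rᵢ₊₁) - B(Rᵢ)`
  have hmid : ∀ i ∈ Finset.Ico 2 N, 0 ≤ (p (R (i + 1)) - p (R i)) * a i := by
    intro i hi
    obtain ⟨hi₂, hiN⟩ := Finset.mem_Ico.1 hi
    refine nonneg_of_mul_nonneg_right ?_ (hc i)
    calc 0 ≤ κ * ((p (R (i + 1)) - p (R i)) * (B (R (i + 1)) - B (R i))) :=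
          mul_nonneg hκ (hp.sub_mul_sub_nonneg hB (hR i (Finset.mem_Icc.2 ⟨hi₂, hiN.le⟩))
            (hR (i + 1) (Finset.mem_Icc.2 ⟨by omega, hiN⟩)))
      _ = c i * ((p (R (i + 1)) - p (R i)) * a i) := by
          rw [mul_left_comm, ← h_mid i hi₂ (by omega)]
          ring
  have habel := sum_Icc_mul_sub_by_parts (fun i => p (R i)) a hN
  linarith [sum_nonneg hmid, mul_nonpos_of_nonneg_of_nonpos (hp₀ _ hR_N) ha_N,
    mul_nonneg (hp₀ _ hR₂) ha₁]

section Trajectories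

variable {N : ℕ} {x : ℕ → ℝ → ℝ} {U : ℝ → ℝ} {t : ℝ} {i : ℕ}

theorem Rd_pos (hN : 0 < N) (hgap : x (i - 1) t < x i t) : 0 < Rd N x i t :=
  div_pos (by positivity) (sub_pos.2 hgap)

theorem hasDerivAt_gap (hx : ∀ i, ContDiff ℝ 2 (x i)) :
    HasDerivAt (fun s => x i s - x (i - 1) s) (deriv (x i) t - deriv (x (i - 1)) t) t :=
  ((hx i).differentiable (by norm_num) t).hasDerivAt.sub
    ((hx (i - 1)).differentiable (by norm_num) t).hasDerivAt

theorem hasDerivAt_deriv_gap (hx : ∀ i, ContDiff ℝ 2 (x i)) :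
    HasDerivAt (fun s => deriv (x i) s - deriv (x (i - 1)) s)
      (deriv (deriv (x i)) t - deriv (deriv (x (i - 1))) t) t :=
  ((hx i).differentiable_deriv_two t).hasDerivAt.sub
    ((hx (i - 1)).differentiable_deriv_two t).hasDerivAt

theorem hasDerivAt_sum_mul_Rd (hN : 0 < N) (hx : ∀ i, ContDiff ℝ 2 (x i))
    (hU : ContDiffOn ℝ 2 U (Ici 0)) (hgap : ∀ i ∈ Finset.Icc 2 N, x (i - 1) t < x i t) :
    HasDerivAt (fun s => ∑ i ∈ Finset.Icc 2 N, U (Rd N x i s) * (x i s - x (i - 1) s))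
      (∑ i ∈ Finset.Icc 2 N,
        -(pressure U (Rd N x i t) * (deriv (x i) t - deriv (x (i - 1)) t))) t := by
  refine HasDerivAt.fun_sum fun i hi => ?_
  have hU₂ := hU.contDiffAt (Ici_mem_nhds (Rd_pos hN (hgap i hi)))
  exact hasDerivAt_mul_comp_div (hU₂.differentiableAt (by norm_num)) (hasDerivAt_gap hx)
    (sub_pos.2 (hgap i hi)).ne'

theorem hasDerivAt_sum_neg_pressure_Rd_mul (hN : 0 < N) (hx : ∀ i, ContDiff ℝ 2 (x i))
    (hU : ContDiffOn ℝ 2 U (Ici 0)) (hgap : ∀ i ∈ Finset.Icc 2 N, x (i - 1) t < x i t) :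
    HasDerivAt (fun s => ∑ i ∈ Finset.Icc 2 N,
        -(pressure U (Rd N x i s) * (deriv (x i) s - deriv (x (i - 1)) s)))
      (∑ i ∈ Finset.Icc 2 N,
        (Rd N x i t ^ 2 * deriv (deriv U) (Rd N x i t) * (deriv (x i) t - deriv (x (i - 1)) t) ^ 2
            / (x i t - x (i - 1) t)
          - pressure U (Rd N x i t) * (deriv (deriv (x i)) t - deriv (deriv (x (i - 1))) t))) t := by
  refine HasDerivAt.fun_sum fun i hi => ?_
  have hU₂ := hU.contDiffAt (Ici_mem_nhds (Rd_pos hN (hgap i hi)))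
  exact hasDerivAt_neg_pressure_comp_div_mul (hU₂.differentiableAt (by norm_num))
    hU₂.hasDerivAt_deriv (hasDerivAt_gap hx) (hasDerivAt_deriv_gap hx) (sub_pos.2 (hgap i hi)).ne'

end Trajectories

theorem stmt_1_general
    (N : ℕ) (hN : 2 ≤ N) (T : ℝ)
    (x : ℕ → ℝ → ℝ)
    (hx : ∀ i, ContDiff ℝ 2 (x i))
    (hord : ∀ i, 1 ≤ i → i < N → ∀ t ∈ Icc (0:ℝ) T, x i t < x (i + 1) t)
    (L : ℝ → ℝ)
    (hL'' : ∀ u, 0 < deriv (deriv L) u)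
    (G : ℝ → ℝ)
    (hG'nonneg : ∀ r ∈ Ioi (0:ℝ), 0 ≤ deriv G r)
    (hG'mono : MonotoneOn (deriv G) (Ioi 0))
    (hEL_mid : ∀ i, 2 ≤ i → i ≤ N - 1 → ∀ t ∈ Icc (0:ℝ) T,
      deriv (deriv L) (deriv (x i) t) * deriv (deriv (x i)) t =
        N * (deriv G (Rd N x (i + 1) t) * (Rd N x (i + 1) t) ^ 2
          - deriv G (Rd N x i t) * (Rd N x i t) ^ 2))
    (hEL_first : ∀ t ∈ Icc (0:ℝ) T,
      deriv (deriv L) (deriv (x 1) t) * deriv (deriv (x 1)) t =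
        N * (deriv G (Rd N x 2 t) * (Rd N x 2 t) ^ 2))
    (hEL_last : ∀ t ∈ Icc (0:ℝ) T,
      deriv (deriv L) (deriv (x N) t) * deriv (deriv (x N)) t =
        - (N * (deriv G (Rd N x N t) * (Rd N x N t) ^ 2)))
    (U : ℝ → ℝ) (hU : ContDiffOn ℝ 2 U (Ici 0))
    (hUconv : ConvexOn ℝ (Ici 0) U) (hU0 : U 0 = 0) :
    ConvexOn ℝ (Icc (0:ℝ) T)
      (fun t => ∑ i ∈ Finset.Icc 2 N, U (Rd N x i t) * (x i t - x (i - 1) t)) := by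
  have hgap : ∀ t ∈ Icc (0:ℝ) T, ∀ i ∈ Finset.Icc 2 N, x (i - 1) t < x i t := by
    intro t ht i hi
    obtain ⟨hi₂, hiN⟩ := Finset.mem_Icc.1 hi
    simpa [Nat.sub_add_cancel (by omega : 1 ≤ i)] using hord (i - 1) (by omega) (by omega) t ht
  have hU₂ : ∀ r ∈ Ioi (0:ℝ), ContDiffAt ℝ 2 U r := fun r hr => hU.contDiffAt (Ici_mem_nhds hr)
  have hUd : ∀ r ∈ Ioi (0:ℝ), DifferentiableAt ℝ U r :=
    fun r hr => (hU₂ r hr).differentiableAt (by norm_num)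
  refine convexOn_of_hasDerivAt2_nonneg (convex_Icc 0 T)
    (fun t ht => hasDerivAt_sum_mul_Rd (by omega) hx hU (hgap t ht))
    (fun t ht => hasDerivAt_sum_neg_pressure_Rd_mul (by omega) hx hU (hgap t ht)) fun t ht => ?_
  have hR : ∀ i ∈ Finset.Icc 2 N, 0 < Rd N x i t := fun i hi => Rd_pos (by omega) (hgap t ht i hi)
  have hB : MonotoneOn (fun r => deriv G r * r ^ 2) (Ioi 0) :=
    hG'mono.mul (fun a ha b _ hab => pow_le_pow_left₀ (le_of_lt ha) hab 2) hG'nonneg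
      fun r _ => sq_nonneg r
  rw [sum_sub_distrib, sub_nonneg]
  refine (sum_mul_sub_nonpos_of_eulerLagrange hN (p := pressure U)
    (a := fun i => deriv (deriv (x i)) t) (c := fun i => deriv (deriv L) (deriv (x i) t))
    (Nat.cast_nonneg N) (fun r hr => pressure_nonneg hUconv hU0 hr (hUd r hr))
    (pressure_monotoneOn hUconv hUd) (fun r hr => mul_nonneg (hG'nonneg r hr) (sq_nonneg r)) hB
    hR (fun i => hL'' _) (fun i h₂ hi => hEL_mid i h₂ hi t ht) (hEL_first t ht)
    (hEL_last t ht)).trans (sum_nonneg fun i hi => ?_)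
  have hU'' : 0 ≤ deriv (deriv U) (Rd N x i t) :=
    (hUconv.subset Ioi_subset_Ici_self (convex_Ioi 0)).nonneg_of_hasDerivAt_deriv
      (Ioi_mem_nhds (hR i hi)) hUd (hU₂ _ (hR i hi)).hasDerivAt_deriv
  exact div_nonneg (mul_nonneg (mul_nonneg (sq_nonneg _) hU'') (sq_nonneg _))
    (sub_pos.2 (hgap t ht i hi)).le

/-- Displacement convexity in the real-line setting: along solutions of the
Euler–Lagrange system with zero potential gradient (with vanishing boundary terms),
for any convex `U ∈ C²([0,∞))` with `U(0) = 0`, the map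
`t ↦ Σ_{i=2}^N U(Rᵢ(t))(xᵢ(t) − x_{i−1}(t))` is convex on `[0,T]`. -/
theorem stmt_1
    (N : ℕ) (hN : 2 ≤ N) (T : ℝ) (hT : 0 < T)
    (x : ℕ → ℝ → ℝ)
    (hx : ∀ i, ContDiff ℝ 2 (x i))
    (hord : ∀ i, 1 ≤ i → i < N → ∀ t ∈ Icc (0:ℝ) T, x i t < x (i + 1) t)
    (L : ℝ → ℝ) (hL : ContDiff ℝ 2 L)
    (hL'' : ∀ u, 0 < deriv (deriv L) u)
    (G : ℝ → ℝ) (hG : ContDiffOn ℝ 1 G (Ioi 0))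
    (hG'nonneg : ∀ r ∈ Ioi (0:ℝ), 0 ≤ deriv G r)
    (hG'mono : MonotoneOn (deriv G) (Ioi 0))
    (hEL_mid : ∀ i, 2 ≤ i → i ≤ N - 1 → ∀ t ∈ Icc (0:ℝ) T,
      deriv (deriv L) (deriv (x i) t) * deriv (deriv (x i)) t =
        N * (deriv G (Rd N x (i + 1) t) * (Rd N x (i + 1) t) ^ 2
          - deriv G (Rd N x i t) * (Rd N x i t) ^ 2))
    (hEL_first : ∀ t ∈ Icc (0:ℝ) T,
      deriv (deriv L) (deriv (x 1) t) * deriv (deriv (x 1)) t =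
        N * (deriv G (Rd N x 2 t) * (Rd N x 2 t) ^ 2))
    (hEL_last : ∀ t ∈ Icc (0:ℝ) T,
      deriv (deriv L) (deriv (x N) t) * deriv (deriv (x N)) t =
        - (N * (deriv G (Rd N x N t) * (Rd N x N t) ^ 2)))
    (U : ℝ → ℝ) (hU : ContDiffOn ℝ 2 U (Ici 0))
    (hUconv : ConvexOn ℝ (Ici 0) U) (hU0 : U 0 = 0) :
    ConvexOn ℝ (Icc (0:ℝ) T)
      (fun t => ∑ i ∈ Finset.Icc 2 N, U (Rd N x i t) * (x i t - x (i - 1) t)) :=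
  stmt_1_general N hN T x hx hord L hL'' G hG'nonneg hG'mono hEL_mid hEL_first hEL_last U hU hUconv
    hU0
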